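/- Energy hierarchy of two-point stationary states, part I: assume D^{(12)} ≠ 0. Let ρ_a be the uniform distribution (all four vertex masses equal 1/2); for i ∈ {1,2} with k := 3−i and D^{(kk)} ≠ 0, |D^{(12)}| ≤ |D^{(kk)}|, let ρ_{b_i} be the distribution with ρ^{(i)}(x_1) = 1 and ρ^{(k)}(x_1) = (1 − D^{(12)}/D^{(kk)})/2, ρ^{(k)}(x_2) = (1 + D^{(12)}/D^{(kk)})/2; let ρ_c be the distribution with ρ^{(1)}(x_1) = ρ^{(2)}(x_1) = 1; and let ρ_d be the distribution with ρ^{(1)}(x_1) = 1, ρ^{(2)}(x_2) = 1. Then: (i) if D^{(kk)} ≠ 0, |D^{(12)}| ≤ |D^{(kk)}| and D^{(ii)} < (D^{(12)})²/D^{(kk)} (the conditions under which ρ_{b_i} is stationary), then E(ρ_{b_i}) < E(ρ_a); (ii) if D^{(11)} < −D^{(12)} and D^{(22)} < −D^{(12)} (the conditions under which ρ_c is stationary), then E(ρ_c) < E(ρ_a); (iii) if D^{(11)} < D^{(12)} and D^{(22)} < D^{(12)} (the conditions under which ρ_d is stationary), then E(ρ_d) < E(ρ_a). -/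
import Mathlib


open Finset

/-- The interaction energy on the two-point space, written in terms of the vertex masses
`ρ i ι = ρ^{(i)}(x_ι)`. -/
noncomputable def energy2 {d : ℕ} (x : Fin 2 → EuclideanSpace ℝ (Fin d))
    (K : Fin 2 → Fin 2 → EuclideanSpace ℝ (Fin d) → EuclideanSpace ℝ (Fin d) → ℝ)
    (ρ : Fin 2 → Fin 2 → ℝ) : ℝ :=
  (1 / 2) * ∑ i : Fin 2, ∑ k : Fin 2, ∑ ι : Fin 2, ∑ κ : Fin 2,
    K i k (x ι) (x κ) * ρ i ι * ρ k κ

/-- The uniform distribution `ρ_a`: all four vertex masses equal `1/2`. -/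
noncomputable def rhoA2 : Fin 2 → Fin 2 → ℝ := fun _ _ => 1 / 2

/-- The distribution `ρ_{b_i}` (with `c = D^{(12)}/D^{(kk)}`): species `i` aggregated at
the first vertex, the other species with masses `(1 ∓ c)/2`. -/
noncomputable def rhoB2 (i : Fin 2) (c : ℝ) : Fin 2 → Fin 2 → ℝ :=
  fun j ι => if j = i then (if ι = 0 then 1 else 0)
    else (if ι = 0 then (1 - c) / 2 else (1 + c) / 2)

/-- The distribution `ρ_c`: both species aggregated at the first vertex. -/
noncomputable def rhoC2 : Fin 2 → Fin 2 → ℝ := fun _ ι => if ι = 0 then 1 else 0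

/-- The distribution `ρ_d`: species 1 aggregated at the first vertex, species 2 at the
second. -/
noncomputable def rhoD2 : Fin 2 → Fin 2 → ℝ :=
  fun i ι => if i = 0 then (if ι = 0 then 1 else 0) else (if ι = 1 then 1 else 0)

/-- Lemma A.1, part I: whenever the stationary states `ρ_{b_i}`, `ρ_c`, `ρ_d` exist
(under their respective existence conditions), each has strictly lower energy than the
uniform state `ρ_a`. -/
theorem two_point_energy_hierarchy_I
    (d : ℕ) (x : Fin 2 → EuclideanSpace ℝ (Fin d)) (hx : x 0 ≠ x 1)
    (μ : Fin 2 → ℝ) (hμ : ∀ ι, 0 < μ ι)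
    (η12 : ℝ) (hη : 0 < η12)
    (K : Fin 2 → Fin 2 → EuclideanSpace ℝ (Fin d) → EuclideanSpace ℝ (Fin d) → ℝ)
    (hKsym : ∀ i k p q, K i k p q = K i k q p)
    (hK12 : ∀ p q, K 0 1 p q = K 1 0 p q)
    (hKdiag : ∀ i k : Fin 2, ∀ p q : EuclideanSpace ℝ (Fin d), K i k p p = K i k q q)
    (D : Fin 2 → Fin 2 → ℝ)
    (hD : ∀ i k, D i k = K i k (x 0) (x 0) - K i k (x 0) (x 1))
    (hD12 : D 0 1 ≠ 0) :
    (∀ i k : Fin 2, i ≠ k → D k k ≠ 0 → |D 0 1| ≤ |D k k| →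
      D i i < (D 0 1) ^ 2 / D k k →
        energy2 x K (rhoB2 i (D 0 1 / D k k)) < energy2 x K rhoA2) ∧
    (D 0 0 < -(D 0 1) → D 1 1 < -(D 0 1) →
      energy2 x K rhoC2 < energy2 x K rhoA2) ∧
    (D 0 0 < D 0 1 → D 1 1 < D 0 1 →
      energy2 x K rhoD2 < energy2 x K rhoA2) := by
  
  have e00 : K 0 0 (x 1) (x 1) = K 0 0 (x 0) (x 0) := hKdiag 0 0 (x 1) (x 0)
  have e01 : K 0 1 (x 1) (x 1) = K 0 1 (x 0) (x 0) := hKdiag 0 1 (x 1) (x 0)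
  have e10 : K 1 0 (x 1) (x 1) = K 1 0 (x 0) (x 0) := hKdiag 1 0 (x 1) (x 0)
  have e11 : K 1 1 (x 1) (x 1) = K 1 1 (x 0) (x 0) := hKdiag 1 1 (x 1) (x 0)
  have s00 : K 0 0 (x 1) (x 0) = K 0 0 (x 0) (x 1) := hKsym 0 0 (x 1) (x 0)
  have s01 : K 0 1 (x 1) (x 0) = K 0 1 (x 0) (x 1) := hKsym 0 1 (x 1) (x 0)
  have s10 : K 1 0 (x 1) (x 0) = K 1 0 (x 0) (x 1) := hKsym 1 0 (x 1) (x 0)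
  have s11 : K 1 1 (x 1) (x 0) = K 1 1 (x 0) (x 1) := hKsym 1 1 (x 1) (x 0)
  have hb : forall i k : Fin 2, K i k (x 0) (x 1) = K i k (x 0) (x 0) - D i k := by
    intro i k; rw [hD]; ring
  have hD10 : D 1 0 = D 0 1 := by
    rw [hD, hD, hK12, hK12]
  refine ⟨?_, ?_, ?_⟩
  · intro i k hik hk hle hlt
    fin_cases i <;> fin_cases k <;>
      simp only [Fin.isValue, Fin.mk_zero, Fin.mk_one] at hik hk hle hlt ⊢
    · exact absurd rfl hik
    · -- i = 0, k = 1
      set c := D 0 1 / D 1 1 with hc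
      have h3 : D 1 1 * c = D 0 1 := mul_div_cancel₀ _ hk
      have h1 : D 1 1 * c ^ 2 = D 0 1 * c := by rw [pow_two, ← mul_assoc, h3]
      have h4 : D 0 1 * c = D 0 1 ^ 2 / D 1 1 := by rw [hc, pow_two, mul_div_assoc]
      simp only [energy2, rhoB2, rhoA2, Fin.sum_univ_two, Fin.isValue,
        if_true, if_false, reduceIte, one_ne_zero, zero_ne_one, Fin.mk_zero, Fin.mk_one]
      rw [e00, e01, e10, e11, s00, s01, s10, s11, hb 0 0, hb 0 1, hb 1 0, hb 1 1]; simp only [hD10]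
      linarith [h1, h4, hlt]
    · -- i = 1, k = 0
      set c := D 0 1 / D 0 0 with hc
      have h3 : D 0 0 * c = D 0 1 := mul_div_cancel₀ _ hk
      have h1 : D 0 0 * c ^ 2 = D 0 1 * c := by rw [pow_two, ← mul_assoc, h3]
      have h4 : D 0 1 * c = D 0 1 ^ 2 / D 0 0 := by rw [hc, pow_two, mul_div_assoc]
      simp only [energy2, rhoB2, rhoA2, Fin.sum_univ_two, Fin.isValue,
        if_true, if_false, reduceIte, one_ne_zero, zero_ne_one, Fin.mk_zero, Fin.mk_one]
      rw [e00, e01, e10, e11, s00, s01, s10, s11, hb 0 0, hb 0 1, hb 1 0, hb 1 1]; simp only [hD10]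
      linarith [h1, h4, hlt]
    · exact absurd rfl hik
  · intro h1 h2
    simp only [energy2, rhoC2, rhoA2, Fin.sum_univ_two, Fin.isValue,
      if_true, if_false, reduceIte, one_ne_zero, zero_ne_one, Fin.mk_zero, Fin.mk_one]
    rw [e00, e01, e10, e11, s00, s01, s10, s11, hb 0 0, hb 0 1, hb 1 0, hb 1 1]; simp only [hD10]
    linarith [h1, h2]
  · intro h1 h2
    simp only [energy2, rhoD2, rhoA2, Fin.sum_univ_two, Fin.isValue,
      if_true, if_false, reduceIte, one_ne_zero, zero_ne_one, Fin.mk_zero, Fin.mk_one]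
    rw [e00, e01, e10, e11, s00, s01, s10, s11, hb 0 0, hb 0 1, hb 1 0, hb 1 1]; simp only [hD10]
    linarith [h1, h2]
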